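/- Let A be a sequence of pairs (a_k, w_k) with w_k > 0, and for each index i let p[i] be the unique index such that A(i, p[i]) is the first (leftmost) block of the decreasingly right-skew partition of A(i, n). Then there do not exist indices k and m with k < m ≤ p[k] < p[m]. -/

import Mathlib

noncomputable def density (a w : ℕ → ℝ) (i j : ℕ) : ℝ :=
  (∑ t ∈ Finset.Icc i j, a t) / (∑ t ∈ Finset.Icc i j, w t)

def RightSkew (a w : ℕ → ℝ) (i k : ℕ) : Prop :=
  ∀ j, i ≤ j → j < k → density a w i j ≤ density a w (j + 1) k

def IsDRSP (a w : ℕ → ℝ) (x y : ℕ) (segs : List (ℕ × ℕ)) : Prop :=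
  segs ≠ [] ∧
  segs.head?.map Prod.fst = some x ∧
  segs.getLast?.map Prod.snd = some y ∧
  (∀ s ∈ segs, s.1 ≤ s.2 ∧ RightSkew a w s.1 s.2) ∧
  segs.Chain' (fun s t => t.1 = s.2 + 1 ∧ density a w t.1 t.2 < density a w s.1 s.2)

open Finset

/-! If `k < m ≤ p k < p m`, right-skewness of `A(k, p k)` gives `μ(k, p k) ≤ μ(m, p k)` and
right-skewness of `A(m, p m)` gives `μ(m, p k) ≤ μ(p k + 1, p m)`. But `A(p k + 1, p m)` is a
prefix of the later blocks of the partition of `A(k, n)`; these are right-skew with densities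
below `μ(k, p k)`, and splitting the prefix at block boundaries (a mediant of densities below a
bound stays below it) shows `μ(p k + 1, p m) < μ(k, p k)`. -/

lemma Finset.sum_Icc_split {M : Type*} [AddCommMonoid M] (f : ℕ → M) {i r j : ℕ} (hir : i ≤ r)
    (hrj : r < j) :
    ∑ t ∈ Icc i j, f t = ∑ t ∈ Icc i r, f t + ∑ t ∈ Icc (r + 1) j, f t := by
  simp only [← Ico_add_one_right_eq_Icc]
  exact (sum_Ico_consecutive f (by omega) (by omega)).symm

section Mediant

variable {a₁ w₁ a₂ w₂ : ℝ}

lemma div_le_add_div_add (hw₁ : 0 < w₁) (hw₂ : 0 < w₂) (h : a₁ / w₁ ≤ a₂ / w₂) :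
    a₁ / w₁ ≤ (a₁ + a₂) / (w₁ + w₂) := by
  rw [div_le_div_iff₀ hw₁ hw₂] at h
  rw [div_le_div_iff₀ hw₁ (by linarith)]
  linarith

lemma add_div_add_le_div (hw₁ : 0 < w₁) (hw₂ : 0 < w₂) (h : a₁ / w₁ ≤ a₂ / w₂) :
    (a₁ + a₂) / (w₁ + w₂) ≤ a₂ / w₂ := by
  rw [div_le_div_iff₀ hw₁ hw₂] at h
  rw [div_le_div_iff₀ (by linarith) hw₂]
  linarith

lemma add_div_add_lt {d : ℝ} (hw₁ : 0 < w₁) (hw₂ : 0 < w₂) (h₁ : a₁ / w₁ < d)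
    (h₂ : a₂ / w₂ < d) : (a₁ + a₂) / (w₁ + w₂) < d := by
  rw [div_lt_iff₀ hw₁] at h₁
  rw [div_lt_iff₀ hw₂] at h₂
  rw [div_lt_iff₀ (by linarith)]
  linarith

end Mediant

section Density

variable {a w : ℕ → ℝ}

lemma sum_Icc_pos (hw : ∀ t, 0 < w t) {i j : ℕ} (hij : i ≤ j) : 0 < ∑ t ∈ Icc i j, w t :=
  sum_pos (fun t _ => hw t) (nonempty_Icc.mpr hij)

lemma density_eq_mediant {i r j : ℕ} (hir : i ≤ r) (hrj : r < j) :
    density a w i j = (∑ t ∈ Icc i r, a t + ∑ t ∈ Icc (r + 1) j, a t) /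
      (∑ t ∈ Icc i r, w t + ∑ t ∈ Icc (r + 1) j, w t) := by
  rw [density, Finset.sum_Icc_split a hir hrj, Finset.sum_Icc_split w hir hrj]

lemma density_lt_of_split (hw : ∀ t, 0 < w t) {i r j : ℕ} {d : ℝ} (hir : i ≤ r) (hrj : r < j)
    (h₁ : density a w i r < d) (h₂ : density a w (r + 1) j < d) : density a w i j < d := by
  rw [density_eq_mediant hir hrj]
  exact add_div_add_lt (sum_Icc_pos hw hir) (sum_Icc_pos hw hrj) h₁ h₂

namespace RightSkew

lemma density_prefix_le (hw : ∀ t, 0 < w t) {i j k : ℕ} (hs : RightSkew a w i k)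
    (hij : i ≤ j) (hjk : j ≤ k) : density a w i j ≤ density a w i k := by
  obtain rfl | hjk := hjk.eq_or_lt
  · rfl
  rw [density_eq_mediant hij hjk]
  exact div_le_add_div_add (sum_Icc_pos hw hij) (sum_Icc_pos hw hjk) (hs j hij hjk)

lemma density_le_suffix (hw : ∀ t, 0 < w t) {i j k : ℕ} (hs : RightSkew a w i k)
    (hij : i ≤ j) (hjk : j < k) : density a w i k ≤ density a w (j + 1) k := by
  rw [density_eq_mediant hij hjk]
  exact add_div_add_le_div (sum_Icc_pos hw hij) (sum_Icc_pos hw hjk) (hs j hij hjk)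

end RightSkew

namespace IsDRSP

variable {x y : ℕ} {s t : ℕ × ℕ} {rest segs : List (ℕ × ℕ)}

lemma head_fst (h : IsDRSP a w x y (s :: rest)) : s.1 = x := by
  simpa using h.2.1

lemma snd_of_singleton (h : IsDRSP a w x y [s]) : s.2 = y := by
  simpa using h.2.2.1

lemma block_of_mem (h : IsDRSP a w x y segs) (hs : s ∈ segs) :
    s.1 ≤ s.2 ∧ RightSkew a w s.1 s.2 :=
  h.2.2.2.1 s hs

lemma tail (h : IsDRSP a w x y (s :: t :: rest)) : IsDRSP a w (s.2 + 1) y (t :: rest) := by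
  obtain ⟨-, -, hlast, hblocks, hchain⟩ := h
  rw [List.Chain', List.isChain_cons_cons] at hchain
  refine ⟨List.cons_ne_nil _ _, by simp [hchain.1.1], by simpa using hlast,
    fun u hu => hblocks u (List.mem_cons_of_mem _ hu), hchain.2⟩

lemma density_lt_head (h : IsDRSP a w x y (s :: rest)) (hu : t ∈ rest) :
    density a w t.1 t.2 < density a w s.1 s.2 := by
  have hchain : List.IsChain (· > ·) ((s :: rest).map fun u => density a w u.1 u.2) :=
    List.isChain_map _ |>.mpr (h.2.2.2.2.imp fun _ _ h => h.2)
  exact List.pairwise_cons.mp hchain.pairwise |>.1 _ (List.mem_map_of_mem hu)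

lemma snd_le (h : IsDRSP a w x y segs) (hs : s ∈ segs) : s.2 ≤ y := by
  induction segs generalizing x s with
  | nil => simp at hs
  | cons u rest ih =>
    cases rest with
    | nil => rw [List.mem_singleton.mp hs, h.snd_of_singleton]
    | cons v rest =>
      rcases List.mem_cons.mp hs with rfl | hs
      · have hv := h.tail.block_of_mem List.mem_cons_self
        have hv_fst := h.tail.head_fst
        have hv_snd := ih h.tail List.mem_cons_self
        omega
      · exact ih h.tail hs

lemma density_prefix_lt (hw : ∀ t, 0 < w t) {d : ℝ} (h : IsDRSP a w x y segs)
    (hd : ∀ s ∈ segs, density a w s.1 s.2 < d) {z : ℕ} (hxz : x ≤ z) (hzy : z ≤ y) :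
    density a w x z < d := by
  induction segs generalizing x with
  | nil => exact absurd rfl h.1
  | cons s rest ih =>
    obtain rfl := h.head_fst
    obtain ⟨hs, hskew⟩ := h.block_of_mem List.mem_cons_self
    by_cases hz : z ≤ s.2
    · exact (hskew.density_prefix_le hw hxz hz).trans_lt (hd s List.mem_cons_self)
    cases rest with
    | nil => exact absurd h.snd_of_singleton (by omega)
    | cons t rest =>
      exact density_lt_of_split hw hs (by omega) (hd s List.mem_cons_self)
        (ih h.tail (fun u hu => hd u (List.mem_cons_of_mem _ hu)) (by omega))

lemma density_lt_head_of_lt (hw : ∀ t, 0 < w t) (h : IsDRSP a w x y (s :: rest)) {z : ℕ}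
    (hsz : s.2 < z) (hzy : z ≤ y) : density a w (s.2 + 1) z < density a w s.1 s.2 := by
  cases rest with
  | nil => exact absurd h.snd_of_singleton (by omega)
  | cons t rest => exact h.tail.density_prefix_lt hw (fun u hu => h.density_lt_head hu) hsz hzy

end IsDRSP

end Density

theorem rightSkew_pointers_no_crossing (a w : ℕ → ℝ) (hw : ∀ t, 0 < w t)
    (n : ℕ) (p : ℕ → ℕ)
    (hp : ∀ i, 1 ≤ i → i ≤ n →
      ∃ segs : List (ℕ × ℕ), IsDRSP a w i n segs ∧ segs.head? = some (i, p i)) :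
    ∀ k m, 1 ≤ k → k < m → m ≤ n → ¬ (m ≤ p k ∧ p k < p m) := by
  intro k m hk hkm hmn ⟨hmpk, hpkpm⟩
  obtain ⟨segsk, hk_part, hk_head⟩ := hp k hk (by omega)
  obtain ⟨segsm, hm_part, hm_head⟩ := hp m (by omega) hmn
  obtain ⟨restk, rfl⟩ : ∃ rest, segsk = (k, p k) :: rest :=
    ⟨segsk.tail, (List.cons_head?_tail hk_head).symm⟩
  have hm_mem : (m, p m) ∈ segsm := List.mem_of_mem_head? hm_head
  obtain ⟨j, rfl⟩ : ∃ j, m = j + 1 := ⟨m - 1, by omega⟩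
  have hk_skew := (hk_part.block_of_mem List.mem_cons_self).2
  have hm_skew := (hm_part.block_of_mem hm_mem).2
  have := calc
    density a w k (p k) ≤ density a w (j + 1) (p k) :=
      hk_skew.density_le_suffix hw (by omega) (by omega)
    _ ≤ density a w (p k + 1) (p (j + 1)) := hm_skew (p k) hmpk hpkpm
    _ < density a w k (p k) :=
      hk_part.density_lt_head_of_lt hw hpkpm (hm_part.snd_le hm_mem)
  exact this.false
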